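/- arXiv:1811.01617 — 2 statements merged into one kernel-verified Lean document; each statement's English description precedes it below -/
import Mathlib

section
/- Let λ ≠ 0 and c ≠ 0 be real constants and let φ : I → ℝ be a smooth positive solution of (4 + λ²·v²)·φ'(v)² = c on an open interval I. Then c > 0 and there exists a constant c₀ such that φ(v) = (√c/λ)·arcsinh(λ·v/2) + c₀ for all v ∈ I, or φ(v) = −(√c/λ)·arcsinh(λ·v/2) + c₀ for all v ∈ I. -/
/-- If φ - g has zero derivative on an open interval, they differ by a constant. -/
lemma aux_const (φ g : ℝ → ℝ) (a b : ℝ) (hab : a < b)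
    (h : ∀ v ∈ Set.Ioo a b, HasDerivAt (fun x => φ x - g x) 0 v) :
    ∃ c₀ : ℝ, ∀ v ∈ Set.Ioo a b, φ v = g v + c₀ := by
  set F : ℝ → ℝ := fun x => φ x - g x with hF
  have key : ∀ x ∈ Set.Ioo a b, ∀ y ∈ Set.Ioo a b, x < y → F x = F y := by
    intro x hx y hy hxy
    have hsub : Set.Icc x y ⊆ Set.Ioo a b := by
      intro z hz
      exact ⟨lt_of_lt_of_le hx.1 hz.1, lt_of_le_of_lt hz.2 hy.2⟩
    have hcont : ContinuousOn F (Set.Icc x y) := fun z hz =>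
      ((h z (hsub hz)).continuousAt).continuousWithinAt
    have hdiff : DifferentiableOn ℝ F (Set.Ioo x y) := fun z hz =>
      ((h z (hsub (Set.Ioo_subset_Icc_self hz))).differentiableAt).differentiableWithinAt
    obtain ⟨ξ, hξ, hslope⟩ := exists_deriv_eq_slope F hxy hcont hdiff
    have h0 : deriv F ξ = 0 := (h ξ (hsub (Set.Ioo_subset_Icc_self hξ))).deriv
    rw [h0] at hslope
    have hyx : y - x ≠ 0 := by linarith
    have : F y - F x = 0 := by
      rcases div_eq_zero_iff.mp hslope.symm with h1 | h1
      · exact h1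
      · exact absurd h1 hyx
    linarith
  have hv₀ : (a + b) / 2 ∈ Set.Ioo a b := ⟨by linarith, by linarith⟩
  refine ⟨F ((a + b) / 2), fun v hv => ?_⟩
  rcases lt_trichotomy v ((a + b) / 2) with h1 | h1 | h1
  · have := key v hv _ hv₀ h1
    simp only [hF] at this ⊢; linarith
  · rw [h1]; simp [hF]
  · have := key _ hv₀ v hv h1
    simp only [hF] at this ⊢; linarith

/-- The ODE (4 + λ²v²)·φ'² = c integrates to an inverse hyperbolic sine. -/
theorem stmt_5 (φ : ℝ → ℝ) (a b : ℝ) (hab : a < b)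
    (hφ : ContDiff ℝ (⊤ : ℕ∞) φ) (hpos : ∀ v ∈ Set.Ioo a b, 0 < φ v)
    (lam c : ℝ) (hlam : lam ≠ 0) (hc : c ≠ 0)
    (hode : ∀ v ∈ Set.Ioo a b, (4 + lam ^ 2 * v ^ 2) * (deriv φ v) ^ 2 = c) :
    0 < c ∧ ∃ c₀ : ℝ,
      ((∀ v ∈ Set.Ioo a b, φ v = (Real.sqrt c / lam) * Real.arsinh (lam * v / 2) + c₀) ∨
       (∀ v ∈ Set.Ioo a b, φ v = -(Real.sqrt c / lam) * Real.arsinh (lam * v / 2) + c₀)) := by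
  have hφd : Differentiable ℝ φ := hφ.differentiable (by simp)
  have hφ'c : Continuous (deriv φ) :=
    ((hφ.of_le (by simp) : ContDiff ℝ (⊤ : ℕ∞) φ).iterate_deriv 1).continuous
  have hPpos : ∀ v : ℝ, 0 < 4 + lam ^ 2 * v ^ 2 := fun v => by positivity
  have hv₀ : (a + b) / 2 ∈ Set.Ioo a b := ⟨by linarith, by linarith⟩
  -- c > 0
  have hcpos : 0 < c := by
    have h := hode _ hv₀
    have : 0 ≤ c := by nlinarith [sq_nonneg (deriv φ ((a + b) / 2)), hPpos ((a + b) / 2)]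
    exact lt_of_le_of_ne this (Ne.symm hc)
  have hsc : 0 < Real.sqrt c := Real.sqrt_pos.mpr hcpos
  -- deriv never vanishes on the interval
  have hne : ∀ v ∈ Set.Ioo a b, deriv φ v ≠ 0 := by
    intro v hv h0
    have := hode v hv
    rw [h0] at this
    simp at this
    exact hc this.symm
  -- the square of the derivative
  have hsq : ∀ v ∈ Set.Ioo a b,
      (deriv φ v) ^ 2 = (Real.sqrt c / Real.sqrt (4 + lam ^ 2 * v ^ 2)) ^ 2 := by
    intro v hv
    have hP := hPpos v
    have h := hode v hv
    rw [div_pow, Real.sq_sqrt hcpos.le, Real.sq_sqrt hP.le]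
    field_simp
    linarith [h]
  -- the antiderivative g and its derivative
  set g : ℝ → ℝ := fun v => (Real.sqrt c / lam) * Real.arsinh (lam * v / 2) with hg
  have hgd : ∀ v : ℝ, HasDerivAt g (Real.sqrt c / Real.sqrt (4 + lam ^ 2 * v ^ 2)) v := by
    intro v
    have hinner : HasDerivAt (fun x : ℝ => lam * x / 2) (lam / 2) v := by
      simpa using ((hasDerivAt_id v).const_mul lam).div_const 2
    have harsinh := (Real.hasDerivAt_arsinh (lam * v / 2)).comp v hinner
    have := harsinh.const_mul (Real.sqrt c / lam)
    refine HasDerivAt.congr_deriv this ?_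
    symm
    have hs1 : 0 < 1 + (lam * v / 2) ^ 2 := by positivity
    have hkey : Real.sqrt (4 + lam ^ 2 * v ^ 2) = 2 * Real.sqrt (1 + (lam * v / 2) ^ 2) := by
      rw [show (4 : ℝ) + lam ^ 2 * v ^ 2 = 2 ^ 2 * (1 + (lam * v / 2) ^ 2) by ring,
        Real.sqrt_mul (by positivity), Real.sqrt_sq (by norm_num)]
    rw [hkey]
    have h2 : Real.sqrt (1 + (lam * v / 2) ^ 2) ≠ 0 := by positivity
    field_simp
  -- the sign of the derivative is constant
  have hsign : (∀ v ∈ Set.Ioo a b, 0 < deriv φ v) ∨ (∀ v ∈ Set.Ioo a b, deriv φ v < 0) := by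
    by_cases hpos0 : 0 < deriv φ ((a + b) / 2)
    · left
      intro v hv
      by_contra hle
      have hneg : deriv φ v < 0 := lt_of_le_of_ne (not_lt.mp hle) (hne v hv)
      have hconn : Set.uIcc v ((a + b) / 2) ⊆ Set.Ioo a b :=
        Set.ordConnected_Ioo.uIcc_subset hv hv₀
      have hcont : ContinuousOn (deriv φ) (Set.uIcc v ((a + b) / 2)) :=
        hφ'c.continuousOn
      have h0mem : (0 : ℝ) ∈ Set.uIcc (deriv φ v) (deriv φ ((a + b) / 2)) :=
        Set.mem_uIcc.mpr (Or.inl ⟨hneg.le, hpos0.le⟩)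
      obtain ⟨z, hz, hz0⟩ := intermediate_value_uIcc hcont h0mem
      exact hne z (hconn hz) hz0
    · right
      have hneg0 : deriv φ ((a + b) / 2) < 0 :=
        lt_of_le_of_ne (not_lt.mp hpos0) (hne _ hv₀)
      intro v hv
      by_contra hle
      have hposv : 0 < deriv φ v := lt_of_le_of_ne (not_lt.mp hle) (Ne.symm (hne v hv))
      have hconn : Set.uIcc v ((a + b) / 2) ⊆ Set.Ioo a b :=
        Set.ordConnected_Ioo.uIcc_subset hv hv₀
      have hcont : ContinuousOn (deriv φ) (Set.uIcc v ((a + b) / 2)) :=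
        hφ'c.continuousOn
      have h0mem : (0 : ℝ) ∈ Set.uIcc (deriv φ v) (deriv φ ((a + b) / 2)) :=
        Set.mem_uIcc.mpr (Or.inr ⟨hneg0.le, hposv.le⟩)
      obtain ⟨z, hz, hz0⟩ := intermediate_value_uIcc hcont h0mem
      exact hne z (hconn hz) hz0
  refine ⟨hcpos, ?_⟩
  rcases hsign with hsgn | hsgn
  · -- positive case: deriv φ v = √c / √(4 + λ²v²)
    have hderiv : ∀ v ∈ Set.Ioo a b,
        deriv φ v = Real.sqrt c / Real.sqrt (4 + lam ^ 2 * v ^ 2) := by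
      intro v hv
      have h1 := hsq v hv
      have h2 : 0 < Real.sqrt c / Real.sqrt (4 + lam ^ 2 * v ^ 2) := by
        exact div_pos hsc (Real.sqrt_pos.mpr (hPpos v))
      nlinarith [hsgn v hv]
    have hF : ∀ v ∈ Set.Ioo a b, HasDerivAt (fun x => φ x - g x) 0 v := by
      intro v hv
      have := (hφd v).hasDerivAt.sub (hgd v)
      rw [hderiv v hv, sub_self] at this
      exact this
    obtain ⟨c₀, hc₀⟩ := aux_const φ g a b hab hF
    exact ⟨c₀, Or.inl hc₀⟩
  · -- negative case
    have hderiv : ∀ v ∈ Set.Ioo a b,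
        deriv φ v = -(Real.sqrt c / Real.sqrt (4 + lam ^ 2 * v ^ 2)) := by
      intro v hv
      have h1 := hsq v hv
      have h2 : 0 < Real.sqrt c / Real.sqrt (4 + lam ^ 2 * v ^ 2) := by
        exact div_pos hsc (Real.sqrt_pos.mpr (hPpos v))
      nlinarith [hsgn v hv]
    have hF : ∀ v ∈ Set.Ioo a b, HasDerivAt (fun x => φ x - (fun y => -g y) x) 0 v := by
      intro v hv
      have := (hφd v).hasDerivAt.sub ((hgd v).neg)
      rw [hderiv v hv] at this
      exact this.congr_deriv (by ring)
    obtain ⟨c₀, hc₀⟩ := aux_const φ (fun y => -g y) a b hab hF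
    refine ⟨c₀, Or.inr fun v hv => ?_⟩
    have := hc₀ v hv
    simp only [hg] at this ⊢
    linarith
end

section
/- Let φ : ℝ → ℝ be smooth positive with (φ'(v)/φ(v))²·(4 + λ²v²) = c for all v, where λ ≠ 0 and c > 0. Then φ(v) = C·exp(±(√c/λ)·arcsinh(λv/2)) for some constant C > 0. -/
lemma aux_const_s17 (φ : ℝ → ℝ) (hφ : ContDiff ℝ (⊤ : ℕ∞) φ) (hpos : ∀ v, 0 < φ v)
    (lam c s : ℝ) (hlam : lam ≠ 0) (hc : 0 < c)
    (hs : ∀ v, deriv φ v / φ v = s * Real.sqrt c / Real.sqrt (4 + lam ^ 2 * v ^ 2)) :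
    ∀ v, φ v = φ 0 * Real.exp ((s * Real.sqrt c / lam) * Real.arsinh (lam * v / 2)) := by
  have hdiff := hφ.differentiable (by simp)
  set g : ℝ → ℝ := fun v => Real.log (φ v) - (s * Real.sqrt c / lam) * Real.arsinh (lam * v / 2)
    with hg
  have hderiv : ∀ v, HasDerivAt g 0 v := by
    intro v
    have h1 : HasDerivAt (fun v => Real.log (φ v)) (deriv φ v / φ v) v := by
      have := (Real.hasDerivAt_log (hpos v).ne').comp v (hdiff v).hasDerivAt
      simpa [div_eq_inv_mul, Function.comp_def] using this
    have hlin : HasDerivAt (fun v : ℝ => lam * v / 2) (lam / 2) v := by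
      simpa using ((hasDerivAt_id v).const_mul lam).div_const 2
    have h2 : HasDerivAt (fun v => Real.arsinh (lam * v / 2))
        ((Real.sqrt (1 + (lam * v / 2) ^ 2))⁻¹ * (lam / 2)) v :=
      (Real.hasDerivAt_arsinh (lam * v / 2)).comp (h₂ := Real.arsinh) v hlin
    have h3 := h1.sub ((h2.const_mul (s * Real.sqrt c / lam)))
    convert h3 using 1
    case e'_4 => exact rfl
    case e'_5 => exact rfl
    case e'_8 => exact rfl
    have hA : (0:ℝ) < Real.sqrt (1 + (lam * v / 2) ^ 2) := Real.sqrt_pos.2 (by positivity)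
    have hkey : Real.sqrt (4 + lam ^ 2 * v ^ 2) = 2 * Real.sqrt (1 + (lam * v / 2) ^ 2) := by
      rw [show (4:ℝ) + lam ^ 2 * v ^ 2 = 2 ^ 2 * (1 + (lam * v / 2) ^ 2) by ring,
        Real.sqrt_mul (by positivity), Real.sqrt_sq (by norm_num)]
    rw [hs v, hkey]
    field_simp
    ring
  have hconst : ∀ v, g v = g 0 := by
    intro v
    have : ∀ x, deriv g x = 0 := fun x => (hderiv x).deriv
    exact is_const_of_deriv_eq_zero (fun x => (hderiv x).differentiableAt) this v 0
  intro v
  have h0 : g 0 = Real.log (φ 0) := by simp [hg]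
  have := hconst v
  rw [h0, hg] at this
  have hlog : Real.log (φ v) = Real.log (φ 0) + (s * Real.sqrt c / lam) * Real.arsinh (lam * v / 2) := by
    simp only at this; linarith
  have := congrArg Real.exp hlog
  rwa [Real.exp_log (hpos v), Real.exp_add, Real.exp_log (hpos 0)] at this

/-- Case 5 (third type): (φ'/φ)²(4 + λ²v²) = c integrates to an arsinh exponential. -/
theorem stmt_17 (φ : ℝ → ℝ)
    (hφ : ContDiff ℝ (⊤ : ℕ∞) φ) (hpos : ∀ v, 0 < φ v)
    (lam c : ℝ) (hlam : lam ≠ 0) (hc : 0 < c)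
    (hode : ∀ v : ℝ, (deriv φ v / φ v) ^ 2 * (4 + lam ^ 2 * v ^ 2) = c) :
    ∃ C : ℝ, 0 < C ∧
      ((∀ v : ℝ, φ v = C * Real.exp ((Real.sqrt c / lam) * Real.arsinh (lam * v / 2))) ∨
       (∀ v : ℝ, φ v = C * Real.exp (-(Real.sqrt c / lam) * Real.arsinh (lam * v / 2)))) := by
  set F : ℝ → ℝ := fun v => deriv φ v / φ v with hF
  have hQ : ∀ v : ℝ, (0:ℝ) < 4 + lam ^ 2 * v ^ 2 := fun v => by positivity
  have hFne : ∀ v, F v ≠ 0 := by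
    intro v h
    have := hode v
    rw [show deriv φ v / φ v = F v from rfl, h] at this
    simp at this
    linarith
  have hFcont : Continuous F := by
    exact (hφ.continuous_deriv (by simp)).div hφ.continuous fun v => (hpos v).ne'
  -- sign constancy
  have hsign : (∀ v, 0 < F v) ∨ (∀ v, F v < 0) := by
    rcases (hFne 0).lt_or_gt with h0 | h0
    · right
      intro v
      by_contra h
      push_neg at h
      have hv : 0 < F v := lt_of_le_of_ne h (Ne.symm (hFne v))
      obtain ⟨w, _, hw⟩ := intermediate_value_uIcc (a := (0:ℝ)) (b := v) (f := F)
        hFcont.continuousOn (show (0:ℝ) ∈ Set.uIcc (F 0) (F v) from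
          Set.mem_uIcc.2 (Or.inl ⟨h0.le, hv.le⟩))
      exact hFne w hw
    · left
      intro v
      by_contra h
      push_neg at h
      have hv : F v < 0 := lt_of_le_of_ne h (hFne v)
      obtain ⟨w, _, hw⟩ := intermediate_value_uIcc (a := (0:ℝ)) (b := v) (f := F)
        hFcont.continuousOn (show (0:ℝ) ∈ Set.uIcc (F 0) (F v) from
          Set.mem_uIcc.2 (Or.inr ⟨hv.le, h0.le⟩))
      exact hFne w hw
  have hsq : ∀ v, F v ^ 2 = (Real.sqrt c / Real.sqrt (4 + lam ^ 2 * v ^ 2)) ^ 2 := by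
    intro v
    have hr : (Real.sqrt c / Real.sqrt (4 + lam ^ 2 * v ^ 2)) ^ 2 = c / (4 + lam ^ 2 * v ^ 2) := by
      rw [div_pow, Real.sq_sqrt hc.le, Real.sq_sqrt (hQ v).le]
    rw [hr, eq_div_iff (hQ v).ne']
    exact hode v
  rcases hsign with hpos' | hneg
  · refine ⟨φ 0, hpos 0, Or.inl ?_⟩
    have hs : ∀ v, F v = 1 * Real.sqrt c / Real.sqrt (4 + lam ^ 2 * v ^ 2) := by
      intro v
      rw [one_mul]
      have h2 : (0:ℝ) ≤ Real.sqrt c / Real.sqrt (4 + lam ^ 2 * v ^ 2) := by positivity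
      exact (pow_left_inj₀ (hpos' v).le h2 two_ne_zero).mp (hsq v)
    have := aux_const_s17 φ hφ hpos lam c 1 hlam hc hs
    intro v
    simpa using this v
  · refine ⟨φ 0, hpos 0, Or.inr ?_⟩
    have hs : ∀ v, F v = (-1) * Real.sqrt c / Real.sqrt (4 + lam ^ 2 * v ^ 2) := by
      intro v
      have h2 : (0:ℝ) ≤ Real.sqrt c / Real.sqrt (4 + lam ^ 2 * v ^ 2) := by positivity
      have hsq' : (-F v) ^ 2 = (Real.sqrt c / Real.sqrt (4 + lam ^ 2 * v ^ 2)) ^ 2 := by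
        rw [neg_pow]; simpa using hsq v
      have := (pow_left_inj₀ (neg_nonneg.2 (hneg v).le) h2 two_ne_zero).mp hsq'
      rw [neg_one_mul, neg_div]
      linarith
    have := aux_const_s17 φ hφ hpos lam c (-1) hlam hc hs
    intro v
    have h := this v
    rw [h]
    ring_nf
end
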